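/- (Main theorem.) Fix t ∈ ℝ and ρ > 0, and let ω, γ be analytic on the closed ball B_ρ(t) ⊂ ℂ with η₁ ≤ |ω| ≤ η₂, |ω'| ≤ η₃ ≤ η₁²/17, and |γ| ≤ η₄ ≤ η₁²/(34η₂) on the ball. Define η̃₃ = η₃ + 2η₂η₄, η̃₁ = η₁ - η₄ - 17η̃₃/(4η₁), η̃₂ = η₂ + η₄ + 17η̃₃/(4η₁). Let k ≥ 0 be an integer such that r := (1/(2η̃₁ρ))(1 + η̃₂/η̃₁)k + η̃₃/(4η̃₁²) ≤ 3/4. Then for every j ≤ k, the j-th iterate of x₀ = iω, x_{m+1} = x_m - R[x_m]/(2(x_m + γ)) is analytic near t and its Riccati residual satisfies |R[x_j](t)| ≤ η̃₃ r^j. -/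

import Mathlib

/-- Riccati residual for complex-analytic functions:
`R[x] = x' + x² + 2γx + ω²`. -/
noncomputable def riccatiResC (ω γ x : ℂ → ℂ) : ℂ → ℂ :=
  fun z => deriv x z + x z ^ 2 + 2 * γ z * x z + ω z ^ 2

/-- The defect-correction iteration: `x₀ = iω`,
`x_{m+1} = x_m - R[x_m]/(2(x_m + γ))`. -/
noncomputable def riccatiIter (ω γ : ℂ → ℂ) : ℕ → (ℂ → ℂ)
  | 0 => fun z => Complex.I * ω z
  | m + 1 => fun z =>
      riccatiIter ω γ m z
        - riccatiResC ω γ (riccatiIter ω γ m) z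
            / (2 * (riccatiIter ω γ m z + γ z))

set_option maxHeartbeats 2000000 in
/-- main theorem: analytic `ω`, `γ` on `B_ρ(t)` with
`η₁ ≤ |ω| ≤ η₂`, `|ω'| ≤ η₃ ≤ η₁²/17`, `|γ| ≤ η₄ ≤ η₁²/(34η₂)`; with
`η̃₃ = η₃ + 2η₂η₄`, `η̃₁ = η₁ - η₄ - 17η̃₃/(4η₁)`, `η̃₂ = η₂ + η₄ + 17η̃₃/(4η₁)`,
and `k` such that `r := (1/(2η̃₁ρ))(1 + η̃₂/η̃₁)k + η̃₃/(4η̃₁²) ≤ 3/4`, for every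
`j ≤ k` the `j`-th iterate is analytic at `t` and `|R[x_j](t)| ≤ η̃₃ r^j`. -/
theorem stmt11 (t ρ : ℝ) (hρ : 0 < ρ) (ω γ : ℂ → ℂ)
    (hωa : AnalyticOnNhd ℂ ω (Metric.closedBall (t : ℂ) ρ))
    (hγa : AnalyticOnNhd ℂ γ (Metric.closedBall (t : ℂ) ρ))
    (η₁ η₂ η₃ η₄ : ℝ) (hη₁ : 0 < η₁)
    (hωlo : ∀ z ∈ Metric.closedBall (t : ℂ) ρ, η₁ ≤ ‖ω z‖)
    (hωhi : ∀ z ∈ Metric.closedBall (t : ℂ) ρ, ‖ω z‖ ≤ η₂)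
    (hω' : ∀ z ∈ Metric.closedBall (t : ℂ) ρ, ‖deriv ω z‖ ≤ η₃)
    (hγb : ∀ z ∈ Metric.closedBall (t : ℂ) ρ, ‖γ z‖ ≤ η₄)
    (hη₃ : η₃ ≤ η₁ ^ 2 / 17) (hη₄ : η₄ ≤ η₁ ^ 2 / (34 * η₂))
    (η₁' η₂' η₃' : ℝ)
    (hη₃' : η₃' = η₃ + 2 * η₂ * η₄)
    (hη₁' : η₁' = η₁ - η₄ - 17 * η₃' / (4 * η₁))
    (hη₂' : η₂' = η₂ + η₄ + 17 * η₃' / (4 * η₁))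
    (k : ℕ) (r : ℝ)
    (hrdef : r = (1 / (2 * η₁' * ρ)) * (1 + η₂' / η₁') * k + η₃' / (4 * η₁' ^ 2))
    (hr : r ≤ 3 / 4) :
    ∀ j ≤ k,
      AnalyticAt ℂ (riccatiIter ω γ j) (t : ℂ) ∧
      ‖riccatiResC ω γ (riccatiIter ω γ j) (t : ℂ)‖ ≤ η₃' * r ^ j := by
  have htmem : (t : ℂ) ∈ Metric.closedBall (t : ℂ) ρ := Metric.mem_closedBall_self hρ.le
  have hη₂η₁ : η₁ ≤ η₂ := (hωlo _ htmem).trans (hωhi _ htmem)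
  have hη₂pos : 0 < η₂ := lt_of_lt_of_le hη₁ hη₂η₁
  have hη₃0 : 0 ≤ η₃ := (norm_nonneg _).trans (hω' _ htmem)
  have hη₄0 : 0 ≤ η₄ := (norm_nonneg _).trans (hγb _ htmem)
  have hη₃'0 : 0 ≤ η₃' := by rw [hη₃']; positivity
  have h2η₂η₄ : 2 * η₂ * η₄ ≤ η₁ ^ 2 / 17 := by
    have h := mul_le_mul_of_nonneg_left hη₄ (by positivity : (0:ℝ) ≤ 2 * η₂)
    have heq : 2 * η₂ * (η₁ ^ 2 / (34 * η₂)) = η₁ ^ 2 / 17 := by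
      field_simp; ring
    linarith [heq ▸ h]
  have hη₃'ub : η₃' ≤ 2 * η₁ ^ 2 / 17 := by rw [hη₃']; linarith
  have hη₄ub : η₄ ≤ η₁ / 34 := by
    have h : η₁ ^ 2 / (34 * η₂) ≤ η₁ ^ 2 / (34 * η₁) := by
      apply div_le_div_of_nonneg_left (by positivity) (by positivity)
      linarith
    have heq : η₁ ^ 2 / (34 * η₁) = η₁ / 34 := by field_simp
    linarith [heq ▸ h]
  have hfrac : 17 * η₃' / (4 * η₁) ≤ η₁ / 2 := by
    rw [div_le_div_iff₀ (by positivity) (by norm_num)]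
    nlinarith
  have hη₁'lb : 8 * η₁ / 17 ≤ η₁' := by rw [hη₁']; linarith
  have hη₁'pos : 0 < η₁' := lt_of_lt_of_le (by positivity) hη₁'lb
  have hη₁'le : η₁' ≤ η₁ := by
    rw [hη₁']
    have : 0 ≤ 17 * η₃' / (4 * η₁) := by positivity
    linarith
  have hη₂'lb : η₁' ≤ η₂' := by
    rw [hη₂']
    have : 0 ≤ 17 * η₃' / (4 * η₁) := by positivity
    linarith
  have hη₂'pos : 0 < η₂' := hη₁'pos.trans_le hη₂'lb
  have hr0 : 0 ≤ r := by rw [hrdef]; positivity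
  have hr1 : r < 1 := lt_of_le_of_lt hr (by norm_num)
  have hterm2 : η₃' / (4 * η₁' ^ 2) ≤ r := by
    rw [hrdef]
    have : 0 ≤ (1 / (2 * η₁' * ρ)) * (1 + η₂' / η₁') * k := by positivity
    linarith
  have hdisp_key : η₃' / (2 * η₁') * 4 ≤ 17 * η₃' / (4 * η₁) := by
    rw [div_mul_eq_mul_div, div_le_div_iff₀ (by positivity) (by positivity)]
    nlinarith [mul_le_mul_of_nonneg_left hη₁'lb hη₃'0]
  -- geometric sums are at most 4
  have hS : ∀ m : ℕ, ∑ l ∈ Finset.range m, r ^ l ≤ 4 := by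
    intro m
    have h1 : (∑ l ∈ Finset.range m, r ^ l) * (r - 1) = r ^ m - 1 := geom_sum_mul r m
    have h2 : 0 ≤ r ^ m := pow_nonneg hr0 m
    have h3 : 0 ≤ ∑ l ∈ Finset.range m, r ^ l :=
      Finset.sum_nonneg fun l _ => pow_nonneg hr0 l
    nlinarith
  -- radii
  set K : ℕ := max k 1 with hKdef
  have hK1 : 1 ≤ K := le_max_right k 1
  have hKpos : (0:ℝ) < K := by exact_mod_cast Nat.lt_of_lt_of_le Nat.zero_lt_one hK1
  set δ : ℝ := ρ / K with hδdef
  have hδpos : 0 < δ := div_pos hρ hKpos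
  have hKδ : (K : ℝ) * δ = ρ := by
    rw [hδdef]; field_simp
  have hρm_le : ∀ m : ℕ, ρ - m * δ ≤ ρ := by
    intro m
    have : 0 ≤ (m : ℝ) * δ := by positivity
    linarith
  have hρm_nonneg : ∀ m : ℕ, m ≤ k → 0 ≤ ρ - m * δ := by
    intro m hm
    have hmK : (m : ℝ) ≤ (K : ℝ) := by
      exact_mod_cast le_trans hm (le_max_left k 1)
    have h := mul_le_mul_of_nonneg_right hmK hδpos.le
    linarith
  -- main induction
  have main : ∀ m : ℕ, m ≤ k →
      AnalyticOnNhd ℂ (riccatiIter ω γ m) (Metric.closedBall (t : ℂ) (ρ - m * δ)) ∧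
      (∀ z ∈ Metric.closedBall (t : ℂ) (ρ - m * δ),
        ‖riccatiIter ω γ m z - Complex.I * ω z‖ ≤
          η₃' / (2 * η₁') * ∑ l ∈ Finset.range m, r ^ l) ∧
      (∀ z ∈ Metric.closedBall (t : ℂ) (ρ - m * δ),
        ‖riccatiResC ω γ (riccatiIter ω γ m) z‖ ≤ η₃' * r ^ m) := by
    intro m
    induction m with
    | zero =>
      intro _
      have h0 : ρ - (0 : ℕ) * δ = ρ := by push_cast; ring
      rw [h0]
      refine ⟨?_, ?_, ?_⟩
      · intro z hz
        exact (analyticAt_const.mul (hωa z hz) : AnalyticAt ℂ (fun w => Complex.I * ω w) z)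
      · intro z _
        simp [riccatiIter]
      · intro z hz
        have hdω : DifferentiableAt ℂ ω z := (hωa z hz).differentiableAt
        have hder : deriv (fun w => Complex.I * ω w) z = Complex.I * deriv ω z :=
          deriv_const_mul _ hdω
        have heq : riccatiResC ω γ (riccatiIter ω γ 0) z
            = Complex.I * deriv ω z + 2 * γ z * (Complex.I * ω z) := by
          show deriv (fun w => Complex.I * ω w) z + (Complex.I * ω z) ^ 2
              + 2 * γ z * (Complex.I * ω z) + ω z ^ 2
              = Complex.I * deriv ω z + 2 * γ z * (Complex.I * ω z)
          rw [hder]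
          linear_combination (ω z) ^ 2 * Complex.I_sq
        rw [heq, pow_zero, mul_one]
        calc ‖Complex.I * deriv ω z + 2 * γ z * (Complex.I * ω z)‖
            ≤ ‖Complex.I * deriv ω z‖ + ‖2 * γ z * (Complex.I * ω z)‖ := norm_add_le _ _
          _ = ‖deriv ω z‖ + 2 * ‖γ z‖ * ‖ω z‖ := by
              simp [norm_mul, Complex.norm_I]
          _ ≤ η₃ + 2 * η₄ * η₂ := by
              have h1 := hω' z hz
              have h2 := hγb z hz
              have h3 := hωhi z hz
              have h5 := norm_nonneg (ω z)
              have h6 : ‖γ z‖ * ‖ω z‖ ≤ η₄ * η₂ :=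
                mul_le_mul h2 h3 h5 hη₄0
              linarith
          _ = η₃' := by rw [hη₃']; ring
    | succ m ih =>
      intro hm1
      have hmk : m ≤ k := Nat.le_of_succ_le hm1
      obtain ⟨ha, hb, hc⟩ := ih hmk
      have hk1 : 1 ≤ k := Nat.one_le_iff_ne_zero.mpr (by omega)
      have hKk : (K : ℝ) = (k : ℝ) := by
        rw [hKdef, max_eq_left hk1]
      have hρstep : ρ - (m + 1 : ℕ) * δ + δ = ρ - m * δ := by push_cast; ring
      have hsub : Metric.closedBall (t : ℂ) (ρ - (m + 1 : ℕ) * δ)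
          ⊆ Metric.closedBall (t : ℂ) (ρ - m * δ) :=
        Metric.closedBall_subset_closedBall (by
          push_cast
          have hq : ρ - ((m : ℝ) + 1) * δ = (ρ - (m : ℝ) * δ) - δ := by ring
          linarith [hδpos.le])
      have hsubρ : Metric.closedBall (t : ℂ) (ρ - m * δ)
          ⊆ Metric.closedBall (t : ℂ) ρ :=
        Metric.closedBall_subset_closedBall (hρm_le m)
      -- lower bound on denominator
      have hlow : ∀ z ∈ Metric.closedBall (t : ℂ) (ρ - m * δ),
          2 * η₁' ≤ ‖2 * (riccatiIter ω γ m z + γ z)‖ := by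
        intro z hz
        have h1 := hb z hz
        have h2 := hωlo z (hsubρ hz)
        have h3 := hγb z (hsubρ hz)
        have hkey : Complex.I * ω z
            = (riccatiIter ω γ m z + γ z)
              - (riccatiIter ω γ m z - Complex.I * ω z) - γ z := by ring
        have htri : ‖Complex.I * ω z‖
            ≤ ‖riccatiIter ω γ m z + γ z‖
              + ‖riccatiIter ω γ m z - Complex.I * ω z‖ + ‖γ z‖ := by
          calc ‖Complex.I * ω z‖
              = ‖(riccatiIter ω γ m z + γ z)
                  - (riccatiIter ω γ m z - Complex.I * ω z) - γ z‖ := by rw [← hkey]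
            _ ≤ ‖(riccatiIter ω γ m z + γ z)
                  - (riccatiIter ω γ m z - Complex.I * ω z)‖ + ‖γ z‖ := norm_sub_le _ _
            _ ≤ ‖riccatiIter ω γ m z + γ z‖
                  + ‖riccatiIter ω γ m z - Complex.I * ω z‖ + ‖γ z‖ := by
                linarith [norm_sub_le (riccatiIter ω γ m z + γ z)
                  (riccatiIter ω γ m z - Complex.I * ω z)]
        have hIω : ‖Complex.I * ω z‖ = ‖ω z‖ := by
          rw [norm_mul, Complex.norm_I, one_mul]
        have hsum : η₃' / (2 * η₁') * ∑ l ∈ Finset.range m, r ^ l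
            ≤ 17 * η₃' / (4 * η₁) := by
          have h4 := hS m
          have h5 : 0 ≤ η₃' / (2 * η₁') := by positivity
          calc η₃' / (2 * η₁') * ∑ l ∈ Finset.range m, r ^ l
              ≤ η₃' / (2 * η₁') * 4 := mul_le_mul_of_nonneg_left h4 h5
            _ ≤ 17 * η₃' / (4 * η₁) := hdisp_key
        have hnorm2 : ‖2 * (riccatiIter ω γ m z + γ z)‖
            = 2 * ‖riccatiIter ω γ m z + γ z‖ := by
          rw [norm_mul]; norm_num
        rw [hnorm2]
        rw [hIω] at htri
        have : η₁' ≤ ‖riccatiIter ω γ m z + γ z‖ := by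
          rw [hη₁']; linarith
        linarith
      have hne : ∀ z ∈ Metric.closedBall (t : ℂ) (ρ - m * δ),
          (2 * (riccatiIter ω γ m z + γ z)) ≠ 0 := by
        intro z hz h0
        have := hlow z hz
        rw [h0, norm_zero] at this
        linarith
      -- analyticity of residual and correction
      have hRa : AnalyticOnNhd ℂ (riccatiResC ω γ (riccatiIter ω γ m))
          (Metric.closedBall (t : ℂ) (ρ - m * δ)) := by
        intro z hz
        have h1 : AnalyticAt ℂ (riccatiIter ω γ m) z := ha z hz
        have h2 : AnalyticAt ℂ (deriv (riccatiIter ω γ m)) z := ha.deriv z hz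
        have h3 : AnalyticAt ℂ ω z := hωa z (hsubρ hz)
        have h4 : AnalyticAt ℂ γ z := hγa z (hsubρ hz)
        exact (((h2.add (h1.pow 2)).add ((analyticAt_const.mul h4).mul h1)).add
          (h3.pow 2) : AnalyticAt ℂ (fun w => deriv (riccatiIter ω γ m) w
            + riccatiIter ω γ m w ^ 2 + 2 * γ w * riccatiIter ω γ m w + ω w ^ 2) z)
      set e : ℂ → ℂ := fun w =>
        riccatiResC ω γ (riccatiIter ω γ m) w / (2 * (riccatiIter ω γ m w + γ w))
        with hedef
      have hea : AnalyticOnNhd ℂ e (Metric.closedBall (t : ℂ) (ρ - m * δ)) := by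
        apply hRa.div
        · intro z hz
          exact analyticAt_const.mul ((ha z hz).add (hγa z (hsubρ hz)))
        · exact hne
      have heb : ∀ z ∈ Metric.closedBall (t : ℂ) (ρ - m * δ),
          ‖e z‖ ≤ η₃' * r ^ m / (2 * η₁') := by
        intro z hz
        rw [hedef]
        simp only
        rw [norm_div]
        exact div_le_div₀ (by positivity) (hc z hz) (by positivity) (hlow z hz)
      -- Cauchy bound for deriv e on the smaller ball
      have hde : ∀ z ∈ Metric.closedBall (t : ℂ) (ρ - (m + 1 : ℕ) * δ),
          ‖deriv e z‖ ≤ (η₃' * r ^ m / (2 * η₁')) / δ := by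
        intro z hz
        have hball : Metric.closedBall z δ
            ⊆ Metric.closedBall (t : ℂ) (ρ - m * δ) := by
          intro w hw
          rw [Metric.mem_closedBall] at *
          calc dist w (t : ℂ) ≤ dist w z + dist z (t : ℂ) := dist_triangle _ _ _
            _ ≤ δ + (ρ - (m + 1 : ℕ) * δ) := add_le_add hw hz
            _ = ρ - m * δ := by push_cast; ring
        apply Complex.norm_deriv_le_of_forall_mem_sphere_norm_le hδpos
        · apply DifferentiableOn.diffContOnCl
          rw [closure_ball z hδpos.ne']
          intro w hw
          exact ((hea w (hball hw)).differentiableAt).differentiableWithinAt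
        · intro w hw
          exact heb w (hball (Metric.sphere_subset_closedBall hw))
      -- residual identity
      have hres : ∀ z ∈ Metric.closedBall (t : ℂ) (ρ - (m + 1 : ℕ) * δ),
          riccatiResC ω γ (riccatiIter ω γ (m + 1)) z = e z ^ 2 - deriv e z := by
        intro z hz
        have hz' := hsub hz
        have hdx : DifferentiableAt ℂ (riccatiIter ω γ m) z := (ha z hz').differentiableAt
        have hde' : DifferentiableAt ℂ e z := (hea z hz').differentiableAt
        have hfun : riccatiIter ω γ (m + 1) = fun w => riccatiIter ω γ m w - e w := rfl
        have hder : deriv (riccatiIter ω γ (m + 1)) z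
            = deriv (riccatiIter ω γ m) z - deriv e z := by
          rw [hfun, deriv_fun_sub hdx hde']
        have hcancel : e z * (2 * (riccatiIter ω γ m z + γ z))
            = riccatiResC ω γ (riccatiIter ω γ m) z :=
          div_mul_cancel₀ _ (hne z hz')
        show deriv (riccatiIter ω γ (m + 1)) z + riccatiIter ω γ (m + 1) z ^ 2
            + 2 * γ z * riccatiIter ω γ (m + 1) z + ω z ^ 2 = e z ^ 2 - deriv e z
        rw [hder]
        have hx1 : riccatiIter ω γ (m + 1) z = riccatiIter ω γ m z - e z := rfl
        rw [hx1]
        have hRunfold : riccatiResC ω γ (riccatiIter ω γ m) z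
            = deriv (riccatiIter ω γ m) z + riccatiIter ω γ m z ^ 2
              + 2 * γ z * riccatiIter ω γ m z + ω z ^ 2 := rfl
        rw [hRunfold] at hcancel
        linear_combination -hcancel
      refine ⟨?_, ?_, ?_⟩
      · intro z hz
        have hz' := hsub hz
        exact ((ha z hz').sub (hea z hz') :
          AnalyticAt ℂ (fun w => riccatiIter ω γ m w - e w) z)
      · intro z hz
        have hz' := hsub hz
        have hx1 : riccatiIter ω γ (m + 1) z = riccatiIter ω γ m z - e z := rfl
        have h1 := hb z hz'
        have h2 := heb z hz'
        have htri : ‖riccatiIter ω γ (m + 1) z - Complex.I * ω z‖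
            ≤ ‖riccatiIter ω γ m z - Complex.I * ω z‖ + ‖e z‖ := by
          rw [hx1]
          calc ‖riccatiIter ω γ m z - e z - Complex.I * ω z‖
              = ‖(riccatiIter ω γ m z - Complex.I * ω z) - e z‖ := by ring_nf
            _ ≤ ‖riccatiIter ω γ m z - Complex.I * ω z‖ + ‖e z‖ := norm_sub_le _ _
        rw [Finset.sum_range_succ]
        have heq : η₃' * r ^ m / (2 * η₁') = η₃' / (2 * η₁') * r ^ m := by ring
        rw [heq] at h2
        calc ‖riccatiIter ω γ (m + 1) z - Complex.I * ω z‖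
            ≤ ‖riccatiIter ω γ m z - Complex.I * ω z‖ + ‖e z‖ := htri
          _ ≤ η₃' / (2 * η₁') * ∑ l ∈ Finset.range m, r ^ l
              + η₃' / (2 * η₁') * r ^ m := add_le_add h1 h2
          _ = η₃' / (2 * η₁') * ((∑ l ∈ Finset.range m, r ^ l) + r ^ m) := by ring
      · intro z hz
        rw [hres z hz]
        have h1 := heb z (hsub hz)
        have h2 := hde z hz
        have hrm1 : r ^ m ≤ 1 := pow_le_one₀ hr0 hr1.le
        have hrm0 : 0 ≤ r ^ m := pow_nonneg hr0 m
        have htri : ‖e z ^ 2 - deriv e z‖ ≤ ‖e z‖ ^ 2 + ‖deriv e z‖ := by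
          calc ‖e z ^ 2 - deriv e z‖ ≤ ‖e z ^ 2‖ + ‖deriv e z‖ := norm_sub_le _ _
            _ = ‖e z‖ ^ 2 + ‖deriv e z‖ := by rw [norm_pow]
        have e1 : ‖e z‖ ^ 2 ≤ η₃' * r ^ m * (η₃' / (4 * η₁' ^ 2)) := by
          have hsq : ‖e z‖ ^ 2 ≤ (η₃' * r ^ m / (2 * η₁')) ^ 2 :=
            pow_le_pow_left₀ (norm_nonneg _) h1 2
          have heq2 : (η₃' * r ^ m / (2 * η₁')) ^ 2
              = η₃' * r ^ m * (η₃' * r ^ m / (4 * η₁' ^ 2)) := by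
            field_simp; ring
          have hmono : η₃' * r ^ m * (η₃' * r ^ m / (4 * η₁' ^ 2))
              ≤ η₃' * r ^ m * (η₃' / (4 * η₁' ^ 2)) := by
            apply mul_le_mul_of_nonneg_left _ (by positivity)
            apply div_le_div_of_nonneg_right _ (by positivity)
            nlinarith
          linarith [heq2 ▸ hsq]
        have e2 : ‖deriv e z‖
            ≤ η₃' * r ^ m * ((1 / (2 * η₁' * ρ)) * (1 + η₂' / η₁') * k) := by
          have heq3 : (η₃' * r ^ m / (2 * η₁')) / δ
              = η₃' * r ^ m * ((K : ℝ) / (2 * η₁' * ρ)) := by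
            rw [hδdef]; field_simp; try ring
          have hK : η₃' * r ^ m * ((K : ℝ) / (2 * η₁' * ρ))
              ≤ η₃' * r ^ m * ((1 / (2 * η₁' * ρ)) * (1 + η₂' / η₁') * k) := by
            apply mul_le_mul_of_nonneg_left _ (by positivity)
            rw [hKk]
            have hfac : (1:ℝ) ≤ 1 + η₂' / η₁' := by
              have : 0 ≤ η₂' / η₁' := by positivity
              linarith
            have hknn : (0:ℝ) ≤ (k : ℝ) / (2 * η₁' * ρ) := by positivity
            calc (k : ℝ) / (2 * η₁' * ρ)
                = (1 / (2 * η₁' * ρ)) * 1 * k := by ring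
              _ ≤ (1 / (2 * η₁' * ρ)) * (1 + η₂' / η₁') * k := by
                  apply mul_le_mul_of_nonneg_right _ (Nat.cast_nonneg k)
                  apply mul_le_mul_of_nonneg_left hfac (by positivity)
          linarith [heq3 ▸ h2]
        have hfinal : η₃' * r ^ m * ((1 / (2 * η₁' * ρ)) * (1 + η₂' / η₁') * k)
            + η₃' * r ^ m * (η₃' / (4 * η₁' ^ 2)) = η₃' * r ^ (m + 1) := by
          rw [hrdef, pow_succ]; ring
        linarith
  intro j hj
  obtain ⟨ha, _, hc⟩ := main j hj
  have htm : (t : ℂ) ∈ Metric.closedBall (t : ℂ) (ρ - j * δ) :=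
    Metric.mem_closedBall_self (hρm_nonneg j hj)
  exact ⟨ha _ htm, hc _ htm⟩
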